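/- arXiv:1711.01907 — 2 statements merged into one kernel-verified Lean document; each statement's English description precedes it below -/
import Mathlib

section
/- Let R be a commutative ring, q ∈ R, A a commutative R-algebra and y ∈ A. Assume R is q-divisible of q-characteristic p > 0. Then the ideal generated by ξ = ξ^{[1]} in the twisted divided power polynomial ring A⟨ξ⟩_{q,y} equals the free A-submodule generated by the elements ξ^{[k]} with p ∤ k. -/
def qInt {R : Type*} [CommRing R] (q : R) (m : ℕ) : R := ∑ i ∈ Finset.range m, q ^ i

def qChoose {R : Type*} [CommRing R] (q : R) : ℕ → ℕ → R
  | _, 0 => 1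
  | 0, _ + 1 => 0
  | n + 1, k + 1 => qChoose q n k + q ^ (k + 1) * qChoose q n (k + 1)

def dpCoeff {A : Type*} [CommRing A] (q y : A) (m n i : ℕ) : A :=
  (-1 : A) ^ i * q ^ (i * (i - 1) / 2) * qChoose q (m + n - i) m * qChoose q m i * y ^ i

/-!
Multiplication by `ξ` acts on the basis by `ξ ξ^{[n]} = (n+1)_q ξ^{[n+1]} - (n)_q y ξ^{[n]}`.
Hence `(n)_q ξ^{[n]}` lies in the ideal `(ξ)` for every `n`, and `(ξ)` is
spanned over `A` by these elements. Since `(m)_q` is periodic of period `p`, it vanishes exactly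
when `p ∣ m` and is a unit otherwise, so these spanning elements are, up to units, the
`ξ^{[k]}` with `p ∤ k`.
-/

section QInt

variable {R : Type*} [CommRing R] (q : R)

lemma qInt_zero : qInt q 0 = 0 := by
  simp [qInt]

lemma qInt_add (a c : ℕ) : qInt q (a + c) = qInt q a + q ^ a * qInt q c := by
  simp [qInt, Finset.sum_range_add, pow_add, Finset.mul_sum]

lemma map_qInt {S : Type*} [CommRing S] (f : R →+* S) (m : ℕ) :
    f (qInt q m) = qInt (f q) m := by
  simp [qInt]

variable {q} {p : ℕ}

lemma qInt_add_mul_of_qInt_eq_zero (hp0 : qInt q p = 0) (a k : ℕ) :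
    qInt q (a + p * k) = qInt q a := by
  induction k with
  | zero => simp
  | succ k ih => rw [mul_add_one, ← add_assoc, qInt_add, ih, hp0, mul_zero, add_zero]

lemma qInt_mod_of_qInt_eq_zero (hp0 : qInt q p = 0) (m : ℕ) : qInt q (m % p) = qInt q m := by
  conv_rhs => rw [← Nat.mod_add_div m p]
  exact (qInt_add_mul_of_qInt_eq_zero hp0 _ _).symm

lemma qInt_eq_zero_of_dvd (hp0 : qInt q p = 0) {m : ℕ} (hm : p ∣ m) : qInt q m = 0 := by
  obtain ⟨k, rfl⟩ := hm
  simpa [qInt_zero] using qInt_add_mul_of_qInt_eq_zero hp0 0 k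

lemma isUnit_qInt_of_not_dvd (hdiv : ∀ m : ℕ, qInt q m = 0 ∨ IsUnit (qInt q m)) (hp : 0 < p)
    (hp0 : qInt q p = 0) (hmin : ∀ m : ℕ, 0 < m → m < p → qInt q m ≠ 0) {m : ℕ} (hm : ¬ p ∣ m) :
    IsUnit (qInt q m) := by
  refine (hdiv m).resolve_left ?_
  rw [← qInt_mod_of_qInt_eq_zero hp0]
  exact hmin _ (Nat.pos_of_ne_zero (mt Nat.dvd_of_mod_eq_zero hm)) (Nat.mod_lt _ hp)

end QInt

lemma qChoose_one_right {R : Type*} [CommRing R] (q : R) (n : ℕ) : qChoose q n 1 = qInt q n := by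
  induction n with
  | zero => simp [qChoose, qInt]
  | succ n ih =>
    rw [qChoose, ih, add_comm n 1, qInt_add]
    simp [qChoose, qInt]

section DividedPowers

variable {A B : Type*} [CommRing A] [CommRing B] [Algebra A B]

/-- `b n` plays the role of `ξ^{[n]}` in `A⟨ξ⟩_{q,y}`. -/
def IsTwistedDividedPowerBasis (q y : A) (b : Module.Basis ℕ A B) : Prop :=
  ∀ m n : ℕ, b m * b n = ∑ i ∈ Finset.range (min m n + 1), dpCoeff q y m n i • b (m + n - i)

variable {q y : A} {b : Module.Basis ℕ A B}

lemma dpCoeff_one_zero (n : ℕ) : dpCoeff q y 1 n 0 = qInt q (n + 1) := by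
  simp [dpCoeff, add_comm 1 n, qChoose_one_right, qChoose]

lemma dpCoeff_one_one (n : ℕ) : dpCoeff q y 1 n 1 = -(qInt q n * y) := by
  simp [dpCoeff, add_comm 1 n, qChoose_one_right, qChoose]

lemma IsTwistedDividedPowerBasis.one_mul_eq (hb : IsTwistedDividedPowerBasis q y b) (n : ℕ) :
    b 1 * b n = qInt q (n + 1) • b (n + 1) - (qInt q n * y) • b n := by
  cases n with
  | zero => simp [hb 1 0, dpCoeff_one_zero, qInt_zero]
  | succ n =>
    rw [hb, show min 1 (n + 1) = 1 by omega, Finset.sum_range_succ, Finset.sum_range_one,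
      dpCoeff_one_zero, dpCoeff_one_one, neg_smul, ← sub_eq_add_neg]
    congr 3 <;> omega

lemma IsTwistedDividedPowerBasis.qInt_smul_mem_span_singleton_one
    (hb : IsTwistedDividedPowerBasis q y b) (n : ℕ) :
    qInt q n • b n ∈ Ideal.span {b 1} := by
  induction n with
  | zero => simp [qInt_zero]
  | succ n ih =>
    have h : qInt q (n + 1) • b (n + 1) = b 1 * b n + y • qInt q n • b n := by
      rw [hb.one_mul_eq, smul_smul, mul_comm y]
      abel
    rw [h, Algebra.smul_def y]
    exact add_mem (Ideal.mul_mem_right _ _ (Ideal.subset_span rfl)) (Ideal.mul_mem_left _ _ ih)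

lemma IsTwistedDividedPowerBasis.span_singleton_one_eq (hb : IsTwistedDividedPowerBasis q y b)
    {S : Set ℕ} (hunit : ∀ k ∈ S, IsUnit (qInt q k)) (hzero : ∀ k ∉ S, qInt q k = 0) :
    (Ideal.span {b 1}).restrictScalars A = Submodule.span A (b '' S) := by
  have qInt_smul_mem (a : A) (n : ℕ) : (qInt q n * a) • b n ∈ Submodule.span A (b '' S) := by
    by_cases hn : n ∈ S
    · exact Submodule.smul_mem _ _ (Submodule.subset_span ⟨n, hn, rfl⟩)
    · simp [hzero n hn]
  refine le_antisymm (fun x hx => ?_) (Submodule.span_le.mpr ?_)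
  · obtain ⟨a, rfl⟩ := Ideal.mem_span_singleton'.mp hx
    clear hx
    induction b.mem_span a using Submodule.span_induction with
    | mem x hx =>
      obtain ⟨n, rfl⟩ := hx
      rw [mul_comm, hb.one_mul_eq]
      exact sub_mem (by simpa using qInt_smul_mem 1 (n + 1)) (qInt_smul_mem y n)
    | zero => simp
    | add u v _ _ hu hv => rw [add_mul]; exact add_mem hu hv
    | smul c u _ hu => rw [smul_mul_assoc]; exact Submodule.smul_mem _ _ hu
  · rintro _ ⟨k, hk, rfl⟩
    obtain ⟨u, hu⟩ := hunit k hk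
    have h := hb.qInt_smul_mem_span_singleton_one k
    rw [← hu, ← Units.smul_def] at h
    rw [SetLike.mem_coe, Submodule.restrictScalars_mem, ← inv_smul_smul u (b k), Units.smul_def,
      Algebra.smul_def]
    exact Ideal.mul_mem_left _ _ h

end DividedPowers

/-- If `R` is `q`-divisible of `q`-characteristic `p > 0`, then in the twisted divided power
polynomial ring `A⟨ξ⟩_{q,y}` (any commutative `A`-algebra `B` with basis `ξ^{[n]} = b n` and the
divided power multiplication rule), the ideal generated by `ξ = b 1` equals the free
`A`-submodule generated by the `ξ^{[k]}` with `p ∤ k`. -/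
theorem statement4 {R A B : Type*} [CommRing R] [CommRing A] [Algebra R A]
    [CommRing B] [Algebra A B] (q : R) (y : A) (p : ℕ)
    (hdiv : ∀ m : ℕ, qInt q m = 0 ∨ IsUnit (qInt q m))
    (hp : 0 < p) (hp0 : qInt q p = 0) (hmin : ∀ m : ℕ, 0 < m → m < p → qInt q m ≠ 0)
    (b : Module.Basis ℕ A B)
    (hb : ∀ m n : ℕ, b m * b n = ∑ i ∈ Finset.range (min m n + 1),
      dpCoeff (algebraMap R A q) y m n i • b (m + n - i)) :
    (Ideal.span {b 1} : Set B) =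
      (Submodule.span A (⇑b '' {k : ℕ | ¬ p ∣ k}) : Set B) := by
  have hunit (k : ℕ) (hk : ¬ p ∣ k) : IsUnit (qInt (algebraMap R A q) k) := by
    rw [← map_qInt]
    exact (isUnit_qInt_of_not_dvd hdiv hp hp0 hmin hk).map _
  have hzero (k : ℕ) (hk : ¬ ¬ p ∣ k) : qInt (algebraMap R A q) k = 0 := by
    rw [← map_qInt, qInt_eq_zero_of_dvd hp0 (not_not.mp hk), map_zero]
  rw [← IsTwistedDividedPowerBasis.span_singleton_one_eq (S := {k | ¬ p ∣ k}) hb hunit hzero,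
    Submodule.coe_restrictScalars]
end

section
/- Let R be a commutative ring, q ∈ R, and (A, σ_A) a twisted commutative R-algebra with y ∈ A satisfying σ_A(y) = qy. Let σ be the σ_A-semilinear ring endomorphism of A⟨ξ⟩_{q,y} with σ(ξ^{[n]}) = Σ_{i=0}^{n} y^i ξ^{[n−i]}. Then for all m, n ∈ ℕ with m ≥ 1: σ^m(ξ^{[n]}) = Σ_{i=0}^{n} (m+i−1 choose i)_q y^i ξ^{[n−i]}. -/
/-!
Write `c_m(i) = (m+i choose i)_q`. If `σ^{m+1}(ξ^{[n]}) = Σ_i c_m(i) y^i ξ^{[n−i]}`, applying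
`σ` once more turns the `i`-th term into `q^i c_m(i) Σ_j y^{i+j} ξ^{[n−i−j]}`, because `σ_A`
fixes the q-binomials (they are polynomials in `q`, and `σ_A` is `R`-linear) and
`σ_A(y^i) = q^i y^i`. Collecting the coefficient of `y^k ξ^{[n−k]}` gives `Σ_{i≤k} q^i c_m(i)`,
which is `c_{m+1}(k)` by the q-hockey-stick identity, an iteration of the q-Pascal recursion.
-/

open Finset

section qChoose

variable {R : Type*} [CommRing R] (q : R)

@[simp]
lemma qChoose_zero_right (n : ℕ) : qChoose q n 0 = 1 := by
  cases n <;> rfl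

lemma qChoose_succ_succ (n k : ℕ) :
    qChoose q (n + 1) (k + 1) = qChoose q n k + q ^ (k + 1) * qChoose q n (k + 1) := rfl

lemma qChoose_eq_zero_of_lt : ∀ {n k : ℕ}, n < k → qChoose q n k = 0
  | 0, _ + 1, _ => rfl
  | n + 1, k + 1, h => by
    rw [qChoose_succ_succ, qChoose_eq_zero_of_lt (by omega), qChoose_eq_zero_of_lt (by omega),
      mul_zero, add_zero]

@[simp]
lemma qChoose_self : ∀ n : ℕ, qChoose q n n = 1
  | 0 => rfl
  | n + 1 => by
    rw [qChoose_succ_succ, qChoose_self n, qChoose_eq_zero_of_lt q (Nat.lt_succ_self n),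
      mul_zero, add_zero]

lemma map_qChoose {S F : Type*} [CommRing S] [FunLike F R S] [RingHomClass F R S] (f : F) :
    ∀ n k : ℕ, f (qChoose q n k) = qChoose (f q) n k
  | n, 0 => by simp
  | 0, k + 1 => map_zero f
  | n + 1, k + 1 => by
    rw [qChoose_succ_succ, qChoose_succ_succ, map_add, map_mul, map_pow, map_qChoose f n k,
      map_qChoose f n (k + 1)]

lemma sum_range_pow_mul_qChoose (m : ℕ) :
    ∀ k : ℕ, ∑ i ∈ range (k + 1), q ^ i * qChoose q (m + i) i = qChoose q (m + k + 1) k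
  | 0 => by simp
  | k + 1 => by
    rw [sum_range_succ, sum_range_pow_mul_qChoose m k, ← Nat.add_assoc m k 1,
      qChoose_succ_succ q (m + k + 1) k]

end qChoose

section TwistedShift

variable {A M F : Type*} [CommRing A] [AddCommGroup M] [Module A M]
  [FunLike F A A] [RingHomClass F A A] {σA : F} {q y : A} {b : ℕ → M} {σ : M → M}

lemma map_sum_of_map_add (hadd : ∀ u v : M, σ (u + v) = σ u + σ v) {ι : Type*} (s : Finset ι)
    (f : ι → M) : σ (∑ i ∈ s, f i) = ∑ i ∈ s, σ (f i) :=
  map_sum (AddMonoidHom.mk' σ hadd) f s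

lemma iterate_succ_apply_eq_sum_qChoose (hq : σA q = q) (hy : σA y = q * y)
    (hadd : ∀ u v : M, σ (u + v) = σ u + σ v)
    (hsmul : ∀ (a : A) (u : M), σ (a • u) = σA a • σ u)
    (hrule : ∀ n : ℕ, σ (b n) = ∑ i ∈ range (n + 1), y ^ i • b (n - i)) (m n : ℕ) :
    σ^[m + 1] (b n) = ∑ i ∈ range (n + 1), (qChoose q (m + i) i * y ^ i) • b (n - i) := by
  induction m generalizing n with
  | zero => simp [hrule]
  | succ m ih =>
    have apply_term : ∀ i ∈ range (n + 1), σ ((qChoose q (m + i) i * y ^ i) • b (n - i)) =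
        ∑ j ∈ range (n + 1 - i),
          (q ^ i * qChoose q (m + i) i * y ^ (i + j)) • b (n - (i + j)) := by
      intro i hi
      rw [hsmul, hrule, smul_sum, ← Nat.sub_add_comm (Nat.le_of_lt_succ (mem_range.1 hi))]
      refine sum_congr rfl fun j _ => ?_
      rw [smul_smul, map_mul, map_pow, hy, map_qChoose, hq, Nat.sub_sub, mul_pow, pow_add]
      ring_nf
    have collect : ∀ k ∈ range (n + 1),
        ∑ i ∈ range (k + 1),
            (q ^ i * qChoose q (m + i) i * y ^ (i + (k - i))) • b (n - (i + (k - i)))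
          = (qChoose q (m + 1 + k) k * y ^ k) • b (n - k) := by
      intro k _
      rw [sum_congr rfl fun i hi => by
          rw [Nat.add_sub_cancel' (Nat.le_of_lt_succ (mem_range.1 hi))],
        ← sum_smul, ← sum_mul, sum_range_pow_mul_qChoose, Nat.add_right_comm]
    rw [Function.iterate_succ_apply', ih, map_sum_of_map_add hadd, sum_congr rfl apply_term,
      ← sum_range_diag_flip (n + 1) fun i j =>
        (q ^ i * qChoose q (m + i) i * y ^ (i + j)) • b (n - (i + j))]
    exact sum_congr rfl collect

end TwistedShift

theorem statement11_general {R A B : Type*} [CommRing R] [CommRing A] [Algebra R A]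
    [CommRing B] [Algebra A B]
    (q : R) (σA : A →ₐ[R] A) (y : A) (hy : σA y = algebraMap R A q * y)
    (b : Module.Basis ℕ A B)
    (σB : B → B)
    (hadd : ∀ u v : B, σB (u + v) = σB u + σB v)
    (hsmul : ∀ (a : A) (u : B), σB (a • u) = σA a • σB u)
    (hrule : ∀ n : ℕ, σB (b n) = ∑ i ∈ Finset.range (n + 1), y ^ i • b (n - i)) :
    ∀ m n : ℕ, 1 ≤ m →
      σB^[m] (b n) = ∑ i ∈ Finset.range (n + 1),
        (qChoose (algebraMap R A q) (m + i - 1) i * y ^ i) • b (n - i) := by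
  intro m n hm
  obtain ⟨m, rfl⟩ : ∃ m', m = m' + 1 := ⟨m - 1, by omega⟩
  simpa only [Nat.add_right_comm m 1, Nat.add_sub_cancel] using
    iterate_succ_apply_eq_sum_qChoose (σA.commutes q) hy hadd hsmul hrule m n

/-- On the twisted divided power polynomial ring `B = A⟨ξ⟩_{q,y}` (basis `b`), if `σ_B` is the
`σ_A`-semilinear ring endomorphism with `σ_B(ξ^{[n]}) = Σ_{i≤n} y^i ξ^{[n−i]}`, then for `m ≥ 1`
one has `σ_B^m(ξ^{[n]}) = Σ_{i=0}^{n} (m+i−1 choose i)_q y^i ξ^{[n−i]}`. -/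
theorem statement11 {R A B : Type*} [CommRing R] [CommRing A] [Algebra R A]
    [CommRing B] [Algebra A B]
    (q : R) (σA : A →ₐ[R] A) (y : A) (hy : σA y = algebraMap R A q * y)
    (b : Module.Basis ℕ A B)
    (hb : ∀ m n : ℕ, b m * b n = ∑ i ∈ Finset.range (min m n + 1),
      dpCoeff (algebraMap R A q) y m n i • b (m + n - i))
    (σB : B → B)
    (hadd : ∀ u v : B, σB (u + v) = σB u + σB v)
    (hsmul : ∀ (a : A) (u : B), σB (a • u) = σA a • σB u)
    (hrule : ∀ n : ℕ, σB (b n) = ∑ i ∈ Finset.range (n + 1), y ^ i • b (n - i)) :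
    ∀ m n : ℕ, 1 ≤ m →
      σB^[m] (b n) = ∑ i ∈ Finset.range (n + 1),
        (qChoose (algebraMap R A q) (m + i - 1) i * y ^ i) • b (n - i) :=
  statement11_general q σA y hy b σB hadd hsmul hrule
end
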